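/- Let w be a braid word that begins with σ_1 and contains no occurrence of σ_1^{−1}. Let σ̂ ∈ Aut(F_n) be the image of the braid represented by w under Wada's representation of type (2). Then the reduced word representing σ̂(x_1) in F_n contains at least 2 occurrences of letters x_1^{±1}. -/

import Mathlib

/-!
Write `φ_{u,t}` for the automorphism `u ↦ u t⁻¹ u`, `t ↦ u` of a free group fixing the other
generators, so that `σ_i` acts as `φ_{x_i,x_{i+1}}` and `σ_i⁻¹` as `φ_{x_{i+1},x_i}`. Tracking the
cancellations between the images of consecutive letters of a reduced word shows: if the reduced
word of `g` begins with `z^{±1}` for some `z ≠ t`, so does that of `φ_{u,t}(g)`, and if it begins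
with `u^e`, that of `φ_{u,t}(g)` begins with `u^e t^{-e}`. Applied to `g` and `g⁻¹`, the first fact
says that `φ_{u,t}` preserves "the reduced word begins and ends with `x_1`" whenever `t ≠ x_1`,
which is the case for every letter of `w` except `σ_1⁻¹`. Hence `σ̂(x_1) = φ_{x_1,x_2}(g)` with `g`
beginning and ending with `x_1`, and its reduced word begins with `x_1 x_2⁻¹` and ends with `x_1`.
-/

/-- The defining relations of the braid group on `m + 1` strands (`m` generators
`σ_1, …, σ_m`, indexed here by `Fin m`): the commutation relations
`σ_i σ_j = σ_j σ_i` for `|i - j| > 1` and the braid relations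
`σ_i σ_{i+1} σ_i = σ_{i+1} σ_i σ_{i+1}`. -/
def braidRels (m : ℕ) : Set (FreeGroup (Fin m)) :=
  {r | (∃ i j : Fin m, (i : ℕ) + 1 < (j : ℕ) ∧
        r = FreeGroup.of i * FreeGroup.of j * (FreeGroup.of i)⁻¹ * (FreeGroup.of j)⁻¹) ∨
       (∃ i j : Fin m, (i : ℕ) + 1 = (j : ℕ) ∧
        r = FreeGroup.of i * FreeGroup.of j * FreeGroup.of i *
            (FreeGroup.of j * FreeGroup.of i * FreeGroup.of j)⁻¹)}

/-- The index in `Fin n` of the generator `x_i` of `F_n` acted on by `σ_i`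
(the strand index `i`, `0`-based). -/
def xL (n : ℕ) (i : Fin (n - 1)) : Fin n := ⟨i, by have := i.isLt; omega⟩

/-- The index in `Fin n` of the generator `x_{i+1}` of `F_n` acted on by `σ_i`. -/
def xR (n : ℕ) (i : Fin (n - 1)) : Fin n := ⟨(i : ℕ) + 1, by have := i.isLt; omega⟩

namespace FreeGroup

variable {α : Type*} {u t : α}

/-- How the reduced word of `wadaMap u t g` can begin when the reduced word of `g` begins with
`p`. The side condition of `right` says that the letter after `u^e` is not `t^{-e}`: it is what
stops the cancellation when `t^e` is preceded by `u^{-e}`. -/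
inductive WadaHead (u t : α) : α × Bool → List (α × Bool) → Prop
  | left (e : Bool) (X : List (α × Bool)) : WadaHead u t (u, e) ((u, e) :: (t, !e) :: X)
  | right_cancel (e : Bool) (X : List (α × Bool)) : WadaHead u t (t, e) ((t, e) :: X)
  | right (e : Bool) (X : List (α × Bool)) :
      IsReduced ((t, e) :: X) → WadaHead u t (t, e) ((u, e) :: X)
  | other (j : α) (e : Bool) (X : List (α × Bool)) :
      j ≠ u → j ≠ t → WadaHead u t (j, e) ((j, e) :: X)

theorem WadaHead.head?_eq {p : α × Bool} {W : List (α × Bool)} (h : WadaHead u t p W)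
    (hp : p.1 ≠ t) : W.head? = some p := by
  cases h <;> simp_all

theorem WadaHead.eq_cons_cons (hut : u ≠ t) {e : Bool} {W : List (α × Bool)}
    (h : WadaHead u t (u, e) W) : ∃ X, W = (u, e) :: (t, !e) :: X := by
  cases h with
  | left e X => exact ⟨X, rfl⟩
  | right_cancel | right => exact absurd rfl hut
  | other j e X hju => exact absurd rfl hju

variable [DecidableEq α]

def wadaMap (u t : α) : FreeGroup α →* FreeGroup α :=
  lift fun j => if j = u then of u * (of t)⁻¹ * of u else if j = t then of u else of j

theorem wadaMap_of (u t j : α) :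
    wadaMap u t (of j) = if j = u then of u * (of t)⁻¹ * of u else if j = t then of u else of j :=
  lift_apply_of

theorem wadaMap_comp_wadaMap (hut : u ≠ t) :
    (wadaMap u t).comp (wadaMap t u) = MonoidHom.id _ := by
  ext j
  by_cases hjt : j = t
  · simp [wadaMap_of, hjt, hut.symm]
  · by_cases hju : j = u <;> simp [wadaMap_of, hjt, hju, hut, hut.symm]

theorem toMonoidHom_eq_wadaMap {E : MulAut (FreeGroup α)}
    (hu : E (of u) = of u * (of t)⁻¹ * of u) (ht : E (of t) = of u)
    (hj : ∀ j, j ≠ u → j ≠ t → E (of j) = of j) : E.toMonoidHom = wadaMap u t := by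
  ext j
  by_cases hju : j = u
  · simp [wadaMap_of, hju, hu]
  · by_cases hjt : j = t
    · subst hjt
      simp [wadaMap_of, hju, ht]
    · simp [wadaMap_of, hju, hjt, hj]

theorem inv_toMonoidHom_eq_wadaMap (hut : u ≠ t) {E : MulAut (FreeGroup α)}
    (hE : E.toMonoidHom = wadaMap u t) : (E⁻¹ : MulAut _).toMonoidHom = wadaMap t u := by
  ext j
  simp only [MulEquiv.coe_toMonoidHom, MulAut.inv_def, MulEquiv.symm_apply_eq]
  rw [← MulEquiv.coe_toMonoidHom, hE, ← MonoidHom.comp_apply, wadaMap_comp_wadaMap hut]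
  rfl

def wadaWord (u t : α) (p : α × Bool) : List (α × Bool) :=
  if p.1 = u then [(u, p.2), (t, !p.2), (u, p.2)] else if p.1 = t then [(u, p.2)] else [p]

theorem wadaMap_mk_singleton (u t : α) (p : α × Bool) :
    wadaMap u t (mk [p]) = mk (wadaWord u t p) := by
  obtain ⟨j, _ | _⟩ := p
  · rw [show mk [(j, false)] = (of j)⁻¹ by simp [of, inv_mk, invRev], _root_.map_inv, wadaMap_of]
    split_ifs <;> subst_vars <;> simp [wadaWord, of, inv_mk, mul_mk, invRev, *]
  · rw [show mk [(j, true)] = of j from rfl, wadaMap_of]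
    split_ifs <;> subst_vars <;> simp [wadaWord, of, inv_mk, mul_mk, invRev, *]

theorem isReduced_wadaWord (hut : u ≠ t) (p : α × Bool) : IsReduced (wadaWord u t p) := by
  obtain ⟨j, e⟩ := p
  unfold wadaWord
  split_ifs <;> simp [isReduced_cons_cons, hut, hut.symm, IsReduced.singleton]

theorem wadaHead_wadaWord (p : α × Bool) : WadaHead u t p (wadaWord u t p) := by
  obtain ⟨j, e⟩ := p
  unfold wadaWord
  split_ifs with hju hjt
  · subst hju; exact .left e _
  · subst hjt; exact .right e [] .singleton
  · exact .other j e [] hju hjt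

section WadaHeadStep

variable {e : Bool} {q : α × Bool} {W : List (α × Bool)}

theorem WadaHead.left_append (hut : u ≠ t) (hq : u = q.1 → e = q.2) (hW : IsReduced W)
    (h : WadaHead u t q W) : WadaHead u t (u, e) (reduce ([(u, e), (t, !e), (u, e)] ++ W)) := by
  cases h with
  | left d X =>
    obtain rfl : e = d := hq rfl
    rw [IsReduced.reduce_eq (by simp_all [isReduced_cons_cons, Ne.symm hut])]
    exact .left e _
  | right d X hX =>
    obtain rfl | rfl : d = e ∨ d = !e := by cases d <;> cases e <;> simp
    · rw [IsReduced.reduce_eq (by simp_all [isReduced_cons_cons, Ne.symm hut])]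
      exact .left d _
    · -- the last letter of the image of `u^e` cancels against the image of `t^{-e}`
      rw [show reduce ([(u, e), (t, !e), (u, e)] ++ (u, !e) :: X) = reduce ((u, e) :: (t, !e) :: X)
          from reduce.Step.eq (Red.Step.not (L₁ := [(u, e), (t, !e)])),
        IsReduced.reduce_eq (by simp_all [isReduced_cons_cons])]
      exact .left e X
  | right_cancel d X =>
    rw [IsReduced.reduce_eq (by simp_all [isReduced_cons_cons, Ne.symm hut])]
    exact .left e _
  | other j d X hju _ =>
    rw [IsReduced.reduce_eq (by simp_all [isReduced_cons_cons, Ne.symm hut, Ne.symm hju])]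
    exact .left e _

theorem WadaHead.right_cons (hut : u ≠ t) (hq : t = q.1 → e = q.2) (hW : IsReduced W)
    (h : WadaHead u t q W) : WadaHead u t (t, e) (reduce ((u, e) :: W)) := by
  cases h with
  | left d X =>
    clear hq
    obtain rfl | rfl : d = e ∨ d = !e := by cases d <;> cases e <;> simp
    · rw [IsReduced.reduce_eq (by simp_all [isReduced_cons_cons])]
      exact .right d _ (by simp_all [isReduced_cons_cons, Ne.symm hut])
    · -- the image of `t^e` cancels against the first letter of the image of `u^{-e}`
      rw [Bool.not_not] at hW ⊢
      rw [reduce.Step.eq Red.Step.cons_not, (isReduced_cons_cons.mp hW).2.reduce_eq]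
      exact .right_cancel e X
  | right_cancel d X | right d X _ =>
    obtain rfl : e = d := hq rfl
    clear hq
    rw [IsReduced.reduce_eq (by simp_all [isReduced_cons_cons])]
    exact .right e _ (by simp_all [isReduced_cons_cons, Ne.symm hut])
  | other j d X hju hjt =>
    rw [IsReduced.reduce_eq (by simp_all [isReduced_cons_cons, Ne.symm hju])]
    exact .right e _ (by simp_all [isReduced_cons_cons, Ne.symm hjt])

theorem WadaHead.other_cons {j : α} (hju : j ≠ u) (hjt : j ≠ t) (hq : j = q.1 → e = q.2)
    (hW : IsReduced W) (h : WadaHead u t q W) : WadaHead u t (j, e) (reduce ((j, e) :: W)) := by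
  rw [IsReduced.reduce_eq (by cases h <;> simp_all [isReduced_cons_cons])]
  exact .other j e W hju hjt

theorem WadaHead.wadaWord_append (hut : u ≠ t) {p : α × Bool} (hpq : p.1 = q.1 → p.2 = q.2)
    (hW : IsReduced W) (h : WadaHead u t q W) :
    WadaHead u t p (reduce (wadaWord u t p ++ W)) := by
  obtain ⟨j, e⟩ := p
  by_cases hju : j = u
  · subst hju
    simpa [wadaWord] using h.left_append hut hpq hW
  · by_cases hjt : j = t
    · subst hjt
      simpa [wadaWord, hju] using h.right_cons hut hpq hW
    · simpa [wadaWord, hju, hjt] using h.other_cons hju hjt hpq hW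

end WadaHeadStep

theorem wadaHead_toWord_wadaMap_mk (hut : u ≠ t) :
    ∀ (p : α × Bool) (M : List (α × Bool)), IsReduced (p :: M) →
      WadaHead u t p (wadaMap u t (mk (p :: M))).toWord
  | p, [], _ => by
    rw [wadaMap_mk_singleton, toWord_mk, (isReduced_wadaWord hut p).reduce_eq]
    exact wadaHead_wadaWord p
  | p, q :: M, h => by
    rw [isReduced_cons_cons] at h
    rw [← List.singleton_append, ← mul_mk, _root_.map_mul, toWord_mul, wadaMap_mk_singleton,
      toWord_mk, (isReduced_wadaWord hut p).reduce_eq]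
    exact (wadaHead_toWord_wadaMap_mk hut q M h.2).wadaWord_append hut h.1 isReduced_toWord

theorem wadaHead_toWord_wadaMap (hut : u ≠ t) {g : FreeGroup α} {a : α × Bool}
    (hg : g.toWord.head? = some a) : WadaHead u t a (wadaMap u t g).toWord := by
  obtain ⟨M, hM⟩ : ∃ M, g.toWord = a :: M := List.head?_eq_some_iff.mp hg
  rw [← mk_toWord (x := g), hM]
  exact wadaHead_toWord_wadaMap_mk hut a M (hM ▸ isReduced_toWord)

theorem toWord_wadaMap_eq_cons_cons (hut : u ≠ t) {g : FreeGroup α} {e : Bool}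
    (hg : g.toWord.head? = some (u, e)) :
    ∃ X, (wadaMap u t g).toWord = (u, e) :: (t, !e) :: X :=
  (wadaHead_toWord_wadaMap hut hg).eq_cons_cons hut

theorem head?_toWord_wadaMap (hut : u ≠ t) {g : FreeGroup α} {a : α × Bool} (hat : a.1 ≠ t)
    (hg : g.toWord.head? = some a) : (wadaMap u t g).toWord.head? = some a :=
  (wadaHead_toWord_wadaMap hut hg).head?_eq hat

def StartsAndEndsWith (z : α) (g : FreeGroup α) : Prop :=
  g.toWord.head? = some (z, true) ∧ g.toWord.getLast? = some (z, true)

theorem getLast?_toWord_eq_some_iff {g : FreeGroup α} {a : α} {b : Bool} :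
    g.toWord.getLast? = some (a, b) ↔ g⁻¹.toWord.head? = some (a, !b) := by
  simp [toWord_inv, invRev, List.head?_reverse]

theorem startsAndEndsWith_wadaMap (hut : u ≠ t) {z : α} (hzt : z ≠ t) {g : FreeGroup α}
    (hg : StartsAndEndsWith z g) : StartsAndEndsWith z (wadaMap u t g) := by
  refine ⟨head?_toWord_wadaMap hut hzt hg.1, ?_⟩
  rw [getLast?_toWord_eq_some_iff, ← _root_.map_inv]
  exact head?_toWord_wadaMap hut hzt (getLast?_toWord_eq_some_iff.mp hg.2)

theorem StartsAndEndsWith.two_le_countP {z : α} {g : FreeGroup α} (hg : StartsAndEndsWith z g)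
    (hlen : 2 ≤ g.toWord.length) : 2 ≤ g.toWord.countP (fun p => decide (p.1 = z)) := by
  obtain ⟨hhead, hlast⟩ := hg
  obtain ⟨L, hL⟩ := List.head?_eq_some_iff.mp hhead
  rw [hL] at hlen hlast ⊢
  obtain ⟨b, L, rfl⟩ : ∃ b L', L = b :: L' :=
    List.exists_cons_of_length_pos (by simp at hlen; omega)
  have hmem : (z, true) ∈ b :: L := List.mem_of_getLast? (by simpa using hlast)
  have hpos : 0 < (b :: L).countP (fun p => decide (p.1 = z)) :=
    List.countP_pos_iff.mpr ⟨_, hmem, by simp⟩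
  rw [List.countP_cons_of_pos (by simp)]
  omega

end FreeGroup

open FreeGroup

def wadaSigma (n : ℕ) : Fin (n - 1) × Bool → FreeGroup (Fin n) →* FreeGroup (Fin n)
  | (i, true) => wadaMap (xL n i) (xR n i)
  | (i, false) => wadaMap (xR n i) (xL n i)

theorem xL_ne_xR (n : ℕ) (i : Fin (n - 1)) : xL n i ≠ xR n i := by
  simp [xL, xR, Fin.ext_iff]

section

variable {n : ℕ} {ψ : PresentedGroup (braidRels (n - 1)) →* MulAut (FreeGroup (Fin n))}

theorem apply_mk_cons_eq_wadaSigma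
    (hψ : ∀ i, (ψ (PresentedGroup.of i)).toMonoidHom = wadaMap (xL n i) (xR n i))
    (p : Fin (n - 1) × Bool) (l : List (Fin (n - 1) × Bool)) (g : FreeGroup (Fin n)) :
    ψ (PresentedGroup.mk _ (mk (p :: l))) g = wadaSigma n p (ψ (PresentedGroup.mk _ (mk l)) g) := by
  rw [← List.singleton_append, ← mul_mk, _root_.map_mul, _root_.map_mul, MulAut.mul_apply]
  obtain ⟨i, _ | _⟩ := p
  · rw [show mk [(i, false)] = (of i)⁻¹ by simp [of, inv_mk, invRev], _root_.map_inv,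
      _root_.map_inv]
    exact DFunLike.congr_fun (inv_toMonoidHom_eq_wadaMap (xL_ne_xR n i) (hψ i)) _
  · exact DFunLike.congr_fun (hψ i) _

theorem startsAndEndsWith_apply_mk (hn : 2 ≤ n)
    (hψ : ∀ i, (ψ (PresentedGroup.of i)).toMonoidHom = wadaMap (xL n i) (xR n i)) :
    ∀ l : List (Fin (n - 1) × Bool), (∀ p ∈ l, p ≠ (⟨0, Nat.sub_pos_of_lt hn⟩, false)) →
      StartsAndEndsWith (⟨0, Nat.zero_lt_of_lt hn⟩ : Fin n)
        (ψ (PresentedGroup.mk _ (mk l)) (of ⟨0, Nat.zero_lt_of_lt hn⟩))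
  | [], _ => by simp [StartsAndEndsWith, ← one_eq_mk]
  | (i, s) :: l, hl => by
    rw [apply_mk_cons_eq_wadaSigma hψ]
    have ih := startsAndEndsWith_apply_mk hn hψ l fun p hp => hl p (.tail _ hp)
    cases s
    · refine startsAndEndsWith_wadaMap (xL_ne_xR n i).symm ?_ ih
      have hi : i ≠ ⟨0, Nat.sub_pos_of_lt hn⟩ := fun h => hl _ List.mem_cons_self (by rw [h])
      simpa [xL, Fin.ext_iff] using hi.symm
    · exact startsAndEndsWith_wadaMap (xL_ne_xR n i) (by simp [xR, Fin.ext_iff]) ih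

end

/-- If `w` is a braid word beginning with `σ_1` and containing no occurrence of
`σ_1⁻¹`, and `σ̂` is the image of the braid represented by `w` under Wada's
representation of type (2) (`σ_i ↦ (x_i ↦ x_i x_{i+1}⁻¹ x_i, x_{i+1} ↦ x_i)`), then
the reduced word of `σ̂(x_1)` contains at least 2 occurrences of letters `x_1^{±1}`. -/
theorem wada_type2_sigma1_positive_two_occurrences (n : ℕ) (hn : 2 ≤ n)
    (ψ : PresentedGroup (braidRels (n - 1)) →* MulAut (FreeGroup (Fin n)))
    (hψ : ∀ i : Fin (n - 1),
      (ψ (PresentedGroup.of i)) (FreeGroup.of (xL n i)) =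
          FreeGroup.of (xL n i) * (FreeGroup.of (xR n i))⁻¹ * FreeGroup.of (xL n i) ∧
      (ψ (PresentedGroup.of i)) (FreeGroup.of (xR n i)) = FreeGroup.of (xL n i) ∧
      ∀ j : Fin n, j ≠ xL n i → j ≠ xR n i →
        (ψ (PresentedGroup.of i)) (FreeGroup.of j) = FreeGroup.of j)
    (w : List (Fin (n - 1) × Bool))
    (hhead : w.head? = some ((⟨0, by omega⟩ : Fin (n - 1)), true))
    (hnonneg : ∀ p ∈ w, p ≠ ((⟨0, by omega⟩ : Fin (n - 1)), false)) :
    2 ≤ ((ψ (PresentedGroup.mk (braidRels (n - 1)) (FreeGroup.mk w)))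
          (FreeGroup.of (⟨0, by omega⟩ : Fin n))).toWord.countP
            (fun p => decide (p.1 = (⟨0, by omega⟩ : Fin n))) := by
  have hψ' i : (ψ (PresentedGroup.of i)).toMonoidHom = wadaMap (xL n i) (xR n i) :=
    toMonoidHom_eq_wadaMap (hψ i).1 (hψ i).2.1 (hψ i).2.2
  obtain ⟨w, rfl⟩ := List.head?_eq_some_iff.mp hhead
  have hg := startsAndEndsWith_apply_mk hn hψ' w fun p hp => hnonneg p (.tail _ hp)
  have hut := xL_ne_xR n ⟨0, by omega⟩
  rw [apply_mk_cons_eq_wadaSigma hψ']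
  obtain ⟨X, hX⟩ := toWord_wadaMap_eq_cons_cons hut hg.1
  refine (startsAndEndsWith_wadaMap hut hut hg).two_le_countP ?_
  simp [hX]
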